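/- arXiv:1207.1308 — 7 statements merged into one kernel-verified Lean document; each statement's English description precedes it below -/
import Mathlib

section
/- With μᵢ = √((z−aᵢ)² + ρ²) − (z−aᵢ) (the ε = 1 case), define 𝓡ᵢⱼ = ρ² + μᵢμⱼ. If aᵢ ≠ aⱼ then 𝓡ᵢⱼ = 2(aᵢ−aⱼ)·μᵢμⱼ/(μᵢ − μⱼ). -/
lemma key_eq (ρ z a μ : ℝ) (hρ : 0 < ρ)
    (h : μ = Real.sqrt ((z - a) ^ 2 + ρ ^ 2) - (z - a)) :
    μ * (μ + 2 * (z - a)) = ρ ^ 2 := by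
  have hs : Real.sqrt ((z - a) ^ 2 + ρ ^ 2) ^ 2 = (z - a) ^ 2 + ρ ^ 2 :=
    Real.sq_sqrt (by positivity)
  subst h; nlinarith [hs]

lemma key_pos (ρ z a μ : ℝ) (hρ : 0 < ρ)
    (h : μ = Real.sqrt ((z - a) ^ 2 + ρ ^ 2) - (z - a)) : 0 < μ := by
  have : |z - a| < Real.sqrt ((z - a) ^ 2 + ρ ^ 2) := by
    rw [show |z - a| = Real.sqrt ((z - a) ^ 2) by
      rw [Real.sqrt_sq_eq_abs]]
    exact Real.sqrt_lt_sqrt (by positivity) (by nlinarith)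
  have := abs_lt.mp this
  rw [h]; linarith [this.2]

/-- With μᵢ = √((z−aᵢ)² + ρ²) − (z−aᵢ) and 𝓡ᵢⱼ = ρ² + μᵢμⱼ,
if aᵢ ≠ aⱼ then 𝓡ᵢⱼ = 2(aᵢ−aⱼ)μᵢμⱼ/(μᵢ−μⱼ). -/
theorem stmt2 (ρ z ai aj : ℝ) (hρ : 0 < ρ) (ha : ai ≠ aj)
    (μi μj : ℝ)
    (hi : μi = Real.sqrt ((z - ai) ^ 2 + ρ ^ 2) - (z - ai))
    (hj : μj = Real.sqrt ((z - aj) ^ 2 + ρ ^ 2) - (z - aj)) :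
    ρ ^ 2 + μi * μj = 2 * (ai - aj) * (μi * μj) / (μi - μj) := by
  have ki := key_eq ρ z ai μi hρ hi
  have kj := key_eq ρ z aj μj hρ hj
  have pi := key_pos ρ z ai μi hρ hi
  have pj := key_pos ρ z aj μj hρ hj
  have hne : μi ≠ μj := by
    intro h
    apply ha
    have : μi * (2 * (z - ai)) = μi * (2 * (z - aj)) := by
      subst h; nlinarith [ki, kj]
    have := mul_left_cancel₀ (ne_of_gt pi) this
    linarith
  rw [eq_div_iff (sub_ne_zero.mpr hne)]
  nlinarith [ki, kj]
end

section
/- Let P and Q be n×n matrices over a field (or commutative ring) such that spec(P) ∩ spec(Q) = ∅, in the sense that the characteristic polynomial 𝔓 of P evaluated at Q, 𝔓(Q), is invertible. Then for any n×m matrix V and m×n matrix U, the matrix X = −𝔓(Q)⁻¹ Σ_{k=1}^{n} 𝔓ₖ Σ_{i=0}^{k−1} Q^{k−1−i} (V U) P^{i}, where 𝔓(λ) = Σ_{k=0}^{n} 𝔓ₖ λᵏ, satisfies the Sylvester equation X P − Q X = V U. -/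
/-- If the characteristic polynomial 𝔓 of P evaluated at Q is invertible,
then X = −𝔓(Q)⁻¹ Σ_{k=1}^{n} 𝔓ₖ Σ_{i=0}^{k−1} Q^{k−1−i} (V U) P^{i} solves
the Sylvester equation X P − Q X = V U. -/
theorem stmt3 {𝕂 : Type*} [Field 𝕂] {n m : ℕ}
    (P Q : Matrix (Fin n) (Fin n) 𝕂)
    (V : Matrix (Fin n) (Fin m) 𝕂) (U : Matrix (Fin m) (Fin n) 𝕂)
    (hinv : IsUnit (Polynomial.aeval Q (Matrix.charpoly P))) :
    let X : Matrix (Fin n) (Fin n) 𝕂 :=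
      -(Polynomial.aeval Q (Matrix.charpoly P))⁻¹ *
        ∑ k ∈ Finset.Icc 1 n, (Matrix.charpoly P).coeff k •
          ∑ i ∈ Finset.range k, Q ^ (k - 1 - i) * (V * U) * P ^ i
    X * P - Q * X = V * U := by
  intro X
  set W := V * U with hW
  set p := Matrix.charpoly P with hp
  set A := Polynomial.aeval Q p with hA
  set S := ∑ k ∈ Finset.Icc 1 n, p.coeff k •
      ∑ i ∈ Finset.range k, Q ^ (k - 1 - i) * W * P ^ i with hS
  have hdet : IsUnit A.det := (Matrix.isUnit_iff_isUnit_det A).mp hinv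
  -- A commutes with Q
  have hAQ : A * Q = Q * A := by
    have h1 : A * Q = Polynomial.aeval Q (p * Polynomial.X) := by
      rw [map_mul, Polynomial.aeval_X]
    rw [h1, mul_comm p, map_mul, Polynomial.aeval_X]
  have hAinvQ : A⁻¹ * Q = Q * A⁻¹ := by
    calc A⁻¹ * Q = A⁻¹ * Q * (A * A⁻¹) := by
          rw [Matrix.mul_nonsing_inv A hdet, mul_one]
      _ = A⁻¹ * (Q * A) * A⁻¹ := by noncomm_ring
      _ = A⁻¹ * (A * Q) * A⁻¹ := by rw [hAQ]
      _ = (A⁻¹ * A) * (Q * A⁻¹) := by noncomm_ring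
      _ = Q * A⁻¹ := by rw [Matrix.nonsing_inv_mul A hdet, one_mul]
  -- telescoping key identity
  have key : ∀ k : ℕ, (∑ i ∈ Finset.range k, Q ^ (k - 1 - i) * W * P ^ i) * P
      - Q * (∑ i ∈ Finset.range k, Q ^ (k - 1 - i) * W * P ^ i)
      = W * P ^ k - Q ^ k * W := by
    intro k
    induction k with
    | zero => simp
    | succ k ih =>
      have step : (∑ i ∈ Finset.range (k + 1), Q ^ (k + 1 - 1 - i) * W * P ^ i)
          = W * P ^ k + Q * ∑ i ∈ Finset.range k, Q ^ (k - 1 - i) * W * P ^ i := by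
        rw [Finset.sum_range_succ, Finset.mul_sum]
        have he : ∀ i ∈ Finset.range k,
            Q ^ (k + 1 - 1 - i) * W * P ^ i
              = Q * (Q ^ (k - 1 - i) * W * P ^ i) := by
          intro i hi
          have hi' : i < k := Finset.mem_range.mp hi
          have : k + 1 - 1 - i = (k - 1 - i) + 1 := by omega
          rw [this, pow_succ', mul_assoc, mul_assoc, mul_assoc]
        rw [Finset.sum_congr rfl he]
        have : k + 1 - 1 - k = 0 := by omega
        rw [this, pow_zero, one_mul]
        exact add_comm _ _
      rw [step]
      have : (W * P ^ k + Q * ∑ i ∈ Finset.range k, Q ^ (k - 1 - i) * W * P ^ i) * P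
          - Q * (W * P ^ k + Q * ∑ i ∈ Finset.range k, Q ^ (k - 1 - i) * W * P ^ i)
          = W * P ^ k * P - Q * (W * P ^ k)
            + Q * ((∑ i ∈ Finset.range k, Q ^ (k - 1 - i) * W * P ^ i) * P
              - Q * ∑ i ∈ Finset.range k, Q ^ (k - 1 - i) * W * P ^ i) := by
        noncomm_ring
      rw [this, ih]
      rw [pow_succ, pow_succ']
      noncomm_ring
  -- sum over Icc
  have hn : p.natDegree = n := by
    rw [hp, Matrix.charpoly_natDegree_eq_dim, Fintype.card_fin]
  have haevalP : (∑ i ∈ Finset.range (n + 1), p.coeff i • P ^ i) = 0 := by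
    have := Polynomial.aeval_eq_sum_range (R := 𝕂) (p := p) P
    rw [hn] at this
    rw [← this, hp, Matrix.aeval_self_charpoly]
  have haevalQ : A = ∑ i ∈ Finset.range (n + 1), p.coeff i • Q ^ i := by
    have := Polynomial.aeval_eq_sum_range (R := 𝕂) (p := p) Q
    rw [hn] at this
    rw [hA, this]
  have hIcc : Finset.Icc 1 n = Finset.range (n + 1) \ {0} := by
    ext x
    simp [Finset.mem_Icc, Finset.mem_range, Nat.lt_succ_iff, Nat.one_le_iff_ne_zero, and_comm]
  -- S * P - Q * S = -(A * W)
  have hSPQS : S * P - Q * S = -(A * W) := by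
    rw [hS, Finset.sum_mul, Finset.mul_sum]
    have h1 : ∀ k ∈ Finset.Icc 1 n,
        (p.coeff k • ∑ i ∈ Finset.range k, Q ^ (k - 1 - i) * W * P ^ i) * P
          = p.coeff k • ((∑ i ∈ Finset.range k, Q ^ (k - 1 - i) * W * P ^ i) * P) := by
      intro k _; rw [smul_mul_assoc]
    have h2 : ∀ k ∈ Finset.Icc 1 n,
        Q * (p.coeff k • ∑ i ∈ Finset.range k, Q ^ (k - 1 - i) * W * P ^ i)
          = p.coeff k • (Q * ∑ i ∈ Finset.range k, Q ^ (k - 1 - i) * W * P ^ i) := by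
      intro k _; rw [mul_smul_comm]
    rw [Finset.sum_congr rfl h1, Finset.sum_congr rfl h2, ← Finset.sum_sub_distrib]
    have h3 : ∀ k ∈ Finset.Icc 1 n,
        p.coeff k • ((∑ i ∈ Finset.range k, Q ^ (k - 1 - i) * W * P ^ i) * P)
          - p.coeff k • (Q * ∑ i ∈ Finset.range k, Q ^ (k - 1 - i) * W * P ^ i)
          = p.coeff k • (W * P ^ k) - p.coeff k • (Q ^ k * W) := by
      intro k _
      rw [← smul_sub, key k, smul_sub]
    rw [Finset.sum_congr rfl h3, Finset.sum_sub_distrib]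
    have hsum1 : ∑ k ∈ Finset.Icc 1 n, p.coeff k • (W * P ^ k)
        = - (p.coeff 0 • W) := by
      have hsplit : ∑ k ∈ Finset.range (n + 1), p.coeff k • (W * P ^ k)
          = p.coeff 0 • W + ∑ k ∈ Finset.Icc 1 n, p.coeff k • (W * P ^ k) := by
        rw [hIcc, Finset.sum_sdiff_eq_sub (by simp), Finset.sum_singleton]
        simp
      have hz : ∑ k ∈ Finset.range (n + 1), p.coeff k • (W * P ^ k) = 0 := by
        have : ∑ k ∈ Finset.range (n + 1), p.coeff k • (W * P ^ k)
            = W * ∑ k ∈ Finset.range (n + 1), p.coeff k • P ^ k := by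
          rw [Finset.mul_sum]
          exact Finset.sum_congr rfl fun k _ => by rw [mul_smul_comm]
        rw [this, haevalP, mul_zero]
      rw [hz] at hsplit
      rw [eq_neg_iff_add_eq_zero, add_comm]
      exact hsplit.symm
    have hsum2 : ∑ k ∈ Finset.Icc 1 n, p.coeff k • (Q ^ k * W)
        = A * W - p.coeff 0 • W := by
      have hsplit : ∑ k ∈ Finset.range (n + 1), p.coeff k • (Q ^ k * W)
          = p.coeff 0 • W + ∑ k ∈ Finset.Icc 1 n, p.coeff k • (Q ^ k * W) := by
        rw [hIcc, Finset.sum_sdiff_eq_sub (by simp), Finset.sum_singleton]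
        simp
      have hz : ∑ k ∈ Finset.range (n + 1), p.coeff k • (Q ^ k * W) = A * W := by
        rw [haevalQ, Finset.sum_mul]
        exact Finset.sum_congr rfl fun k _ => by rw [smul_mul_assoc]
      rw [hz] at hsplit
      rw [hsplit]
      abel
    rw [hsum1, hsum2]
    abel
  -- conclude
  show -A⁻¹ * S * P - Q * (-A⁻¹ * S) = W
  have : -A⁻¹ * S * P - Q * (-A⁻¹ * S)
      = -(A⁻¹ * (S * P - Q * S)) := by
    have hq : Q * (A⁻¹ * S) = A⁻¹ * (Q * S) := by
      rw [← mul_assoc, ← hAinvQ, mul_assoc]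
    calc -A⁻¹ * S * P - Q * (-A⁻¹ * S)
        = -(A⁻¹ * (S * P)) + Q * (A⁻¹ * S) := by
          rw [mul_assoc]; noncomm_ring
      _ = -(A⁻¹ * (S * P)) + A⁻¹ * (Q * S) := by rw [hq]
      _ = -(A⁻¹ * (S * P - Q * S)) := by rw [mul_sub]; abel
  rw [this, hSPQS]
  rw [mul_neg, neg_neg, ← mul_assoc, Matrix.nonsing_inv_mul A hdet, one_mul]
end

section
/- Let ε = ±1, and let P, Q, X be invertible n×n matrices, g₀ a symmetric m×m matrix, V an n×m matrix, and set U = (V g₀)ᵀ. Assume Pᵀ = −ε Q⁻¹, that X satisfies the Sylvester equation X P − Q X = V U, and that P and Q are independent in the sense that the only n×n matrix Y with Q Y = Y P is Y = 0. Then Q X is symmetric, i.e., (Q X)ᵀ = Q X. -/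
open Matrix

/-- If Pᵀ = −ε Q⁻¹, g₀ is symmetric, U = (V g₀)ᵀ, X solves the Sylvester
equation X P − Q X = V U, and P and Q are independent, then Q X is symmetric. -/
theorem stmt6 (ε : ℝ) (hε : ε = 1 ∨ ε = -1) {n m : ℕ}
    (P Q X : Matrix (Fin n) (Fin n) ℝ)
    (hP : IsUnit P) (hQ : IsUnit Q) (hX : IsUnit X)
    (g0 : Matrix (Fin m) (Fin m) ℝ) (hg0 : g0ᵀ = g0)
    (V : Matrix (Fin n) (Fin m) ℝ)
    (hPQ : Pᵀ = (-ε) • Q⁻¹)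
    (hSyl : X * P - Q * X = V * (V * g0)ᵀ)
    (hind : ∀ Y : Matrix (Fin n) (Fin n) ℝ, Q * Y = Y * P → Y = 0) :
    (Q * X)ᵀ = Q * X := by
  have hε2 : ε * ε = 1 := by rcases hε with h | h <;> simp [h]
  have hQdetU : IsUnit Q.det := (Matrix.isUnit_iff_isUnit_det Q).mp hQ
  set M := V * (V * g0)ᵀ with hM
  have hMsym : Mᵀ = M := by
    simp [hM, Matrix.transpose_mul, hg0, Matrix.mul_assoc]
  have h2 : Q * Pᵀ = (-ε) • 1 := by
    rw [hPQ, Matrix.mul_smul, Matrix.mul_nonsing_inv Q hQdetU]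
  have h1 : Pᵀ * Q = (-ε) • 1 := by
    rw [hPQ, Matrix.smul_mul, Matrix.nonsing_inv_mul Q hQdetU]
  have h3 : Qᵀ * P = (-ε) • 1 := by
    have := congrArg Matrix.transpose h1
    simpa [Matrix.transpose_mul, Matrix.transpose_smul] using this
  have h4 : P * Qᵀ = (-ε) • 1 := by
    have := congrArg Matrix.transpose h2
    simpa [Matrix.transpose_mul, Matrix.transpose_smul] using this
  -- transpose the Sylvester equation
  have hSylT : Pᵀ * Xᵀ - Xᵀ * Qᵀ = M := by
    have := congrArg Matrix.transpose hSyl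
    simpa [Matrix.transpose_sub, Matrix.transpose_mul, hMsym] using this
  -- multiply left by Q, right by P
  have h6 : Q * ((Pᵀ * Xᵀ - Xᵀ * Qᵀ) * P)
      = (-ε) • (Xᵀ * P) - (-ε) • (Q * Xᵀ) := by
    rw [Matrix.sub_mul, Matrix.mul_sub]
    congr 1
    · calc Q * (Pᵀ * Xᵀ * P) = (Q * Pᵀ) * (Xᵀ * P) := by noncomm_ring
        _ = (-ε) • (Xᵀ * P) := by rw [h2, Matrix.smul_mul, one_mul]
    · calc Q * (Xᵀ * Qᵀ * P) = (Q * Xᵀ) * (Qᵀ * P) := by noncomm_ring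
        _ = (-ε) • (Q * Xᵀ) := by rw [h3, Matrix.mul_smul, mul_one]
  have h8 : (-ε) • (Xᵀ * P - Q * Xᵀ) = Q * (M * P) := by
    rw [smul_sub, ← h6, hSylT]
  have hsub : Xᵀ * P - Q * Xᵀ = (-ε) • (Q * (M * P)) := by
    have := congrArg (fun A => (-ε) • A) h8
    simpa [smul_smul, neg_mul_neg, hε2] using this
  have hQXT : Q * Xᵀ = Xᵀ * P + ε • (Q * (M * P)) := by
    have : Q * Xᵀ = Xᵀ * P - (-ε) • (Q * (M * P)) := by
      rw [← hsub]; abel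
    rw [this, neg_smul]; abel
  -- the independence argument: Y = Xᵀ + ε • (Q X P) satisfies Q Y = Y P
  have hY : Xᵀ + ε • (Q * X * P) = 0 := by
    apply hind
    rw [Matrix.mul_add, Matrix.add_mul, Matrix.mul_smul, Matrix.smul_mul,
      hQXT, hSyl.symm, add_assoc, ← smul_add]
    congr 1
    congr 1
    noncomm_ring
  have hXT : Xᵀ = (-ε) • (Q * X * P) := by
    have := hY
    rw [add_eq_zero_iff_eq_neg] at this
    rw [this, neg_smul]
  calc (Q * X)ᵀ = Xᵀ * Qᵀ := by rw [Matrix.transpose_mul]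
    _ = (-ε) • (Q * X * P) * Qᵀ := by rw [hXT]
    _ = (-ε) • ((Q * X) * (P * Qᵀ)) := by
        rw [Matrix.smul_mul, Matrix.mul_assoc]
    _ = (-ε) • ((Q * X) * ((-ε) • 1)) := by rw [h4]
    _ = Q * X := by
        rw [Matrix.mul_smul, mul_one, smul_smul, neg_mul_neg, hε2, one_smul]
end

section
/- Under the hypotheses of the previous statement (Pᵀ = −ε Q⁻¹, g₀ symmetric, U = (V g₀)ᵀ, X invertible solving X P − Q X = V U, and P, Q independent), the matrix g = (I + U (Q X)⁻¹ V) g₀ is symmetric. -/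
open Matrix

/-- Under the hypotheses Pᵀ = −ε Q⁻¹, g₀ symmetric, U = (V g₀)ᵀ,
X invertible solving X P − Q X = V U, P and Q independent, and Q X invertible,
the matrix g = (I + U (Q X)⁻¹ V) g₀ is symmetric. -/
theorem stmt7 (ε : ℝ) (hε : ε = 1 ∨ ε = -1) {n m : ℕ}
    (P Q X : Matrix (Fin n) (Fin n) ℝ)
    (hP : IsUnit P) (hQ : IsUnit Q) (hX : IsUnit X) (hQX : IsUnit (Q * X))
    (g0 : Matrix (Fin m) (Fin m) ℝ) (hg0 : g0ᵀ = g0)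
    (V : Matrix (Fin n) (Fin m) ℝ)
    (hPQ : Pᵀ = (-ε) • Q⁻¹)
    (hSyl : X * P - Q * X = V * (V * g0)ᵀ)
    (hind : ∀ Y : Matrix (Fin n) (Fin n) ℝ, Q * Y = Y * P → Y = 0) :
    let U := (V * g0)ᵀ
    let g := (1 + U * (Q * X)⁻¹ * V) * g0
    gᵀ = g := by
  intro U g
  have hQd : IsUnit Q.det := (Matrix.isUnit_iff_isUnit_det Q).mp hQ
  have hε2 : (-ε) * (-ε) = 1 := by rcases hε with h | h <;> rw [h] <;> norm_num
  have hQPT : Q * Pᵀ = (-ε) • (1 : Matrix (Fin n) (Fin n) ℝ) := by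
    rw [hPQ, Matrix.mul_smul, Matrix.mul_nonsing_inv Q hQd]
  have hPTQ : Pᵀ * Q = (-ε) • (1 : Matrix (Fin n) (Fin n) ℝ) := by
    rw [hPQ, Matrix.smul_mul, Matrix.nonsing_inv_mul Q hQd]
  have hQTP : Qᵀ * P = (-ε) • (1 : Matrix (Fin n) (Fin n) ℝ) := by
    have h := congrArg Matrix.transpose hPTQ
    simpa [Matrix.transpose_mul, Matrix.transpose_smul] using h
  -- V * U is symmetric
  have hVU : (V * (V * g0)ᵀ)ᵀ = V * (V * g0)ᵀ := by
    rw [Matrix.transpose_mul, Matrix.transpose_transpose, Matrix.transpose_mul, hg0,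
      Matrix.mul_assoc]
  -- the candidate Z = (-ε) • (Q X P)ᵀ solves the same Sylvester equation
  set Z : Matrix (Fin n) (Fin n) ℝ := (-ε) • (Q * X * P)ᵀ with hZdef
  have hZP : Z * P = Pᵀ * Xᵀ := by
    rw [hZdef, Matrix.transpose_mul, Matrix.transpose_mul, Matrix.smul_mul,
      Matrix.mul_assoc, Matrix.mul_assoc, hQTP]
    rw [Matrix.mul_smul, Matrix.mul_one, Matrix.mul_smul, smul_smul, hε2, one_smul]
  have hQZ : Q * Z = Xᵀ * Qᵀ := by
    rw [hZdef, Matrix.transpose_mul, Matrix.transpose_mul, Matrix.mul_smul]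
    rw [show Q * (Pᵀ * (Xᵀ * Qᵀ)) = Q * Pᵀ * (Xᵀ * Qᵀ) by rw [Matrix.mul_assoc], hQPT,
      Matrix.smul_mul, one_mul, smul_smul, hε2, one_smul]
  have hZSyl : Z * P - Q * Z = V * (V * g0)ᵀ := by
    rw [hZP, hQZ, ← hVU, ← hSyl]
    rw [Matrix.transpose_sub, Matrix.transpose_mul, Matrix.transpose_mul]
  -- uniqueness: X = Z
  have hXZ : X = Z := by
    have h : Q * (X - Z) = (X - Z) * P := by
      have h2 : X * P - Q * X = Z * P - Q * Z := hSyl.trans hZSyl.symm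
      rw [Matrix.mul_sub, Matrix.sub_mul]
      exact (sub_eq_sub_iff_sub_eq_sub.mp h2).symm
    exact sub_eq_zero.mp (hind (X - Z) h)
  -- hence Q X is symmetric
  have hMsym : (Q * X)ᵀ = Q * X := by
    rw [Matrix.transpose_mul]
    conv_rhs => rw [hXZ]
    rw [hQZ]
  have hMinv : ((Q * X)⁻¹)ᵀ = (Q * X)⁻¹ := by
    rw [Matrix.transpose_nonsing_inv, hMsym]
  -- finish
  show ((1 + U * (Q * X)⁻¹ * V) * g0)ᵀ = (1 + U * (Q * X)⁻¹ * V) * g0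
  have hU : U = g0 * Vᵀ := by
    show (V * g0)ᵀ = g0 * Vᵀ
    rw [Matrix.transpose_mul, hg0]
  have hUT : Uᵀ = V * g0 := by
    show (V * g0)ᵀᵀ = V * g0
    rw [Matrix.transpose_transpose]
  rw [Matrix.transpose_mul, Matrix.transpose_add, Matrix.transpose_one,
    Matrix.transpose_mul, Matrix.transpose_mul, hMinv, hUT, hg0,
    Matrix.mul_add, Matrix.add_mul, Matrix.mul_one]
  simp [hU, Matrix.mul_assoc]
end

section
/- Let g₀, P, Q, X be invertible matrices (g₀ of size m×m; P, Q, X of size n×n), U an m×n matrix and V an n×m matrix, such that the Sylvester equation X P − Q X = V U holds and X P is invertible. Then the matrix g = (I + U (Q X)⁻¹ V) g₀ is invertible with inverse g⁻¹ = g₀⁻¹ (I − U (X P)⁻¹ V). -/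
open Matrix

/-- If X P − Q X = V U with g₀, P, Q, X, Q X and X P invertible, then
g = (I + U (Q X)⁻¹ V) g₀ is invertible with inverse g₀⁻¹ (I − U (X P)⁻¹ V). -/
theorem stmt8 {𝕂 : Type*} [Field 𝕂] {m n : ℕ}
    (g0 : Matrix (Fin m) (Fin m) 𝕂) (P Q X : Matrix (Fin n) (Fin n) 𝕂)
    (U : Matrix (Fin m) (Fin n) 𝕂) (V : Matrix (Fin n) (Fin m) 𝕂)
    (hg0 : IsUnit g0) (hP : IsUnit P) (hQ : IsUnit Q) (hX : IsUnit X)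
    (hXP : IsUnit (X * P)) (hQX : IsUnit (Q * X))
    (hSyl : X * P - Q * X = V * U) :
    let g := (1 + U * (Q * X)⁻¹ * V) * g0
    let gi := g0⁻¹ * (1 - U * (X * P)⁻¹ * V)
    g * gi = 1 ∧ gi * g = 1 := by
  intro g gi
  have hg0d : IsUnit g0.det := (Matrix.isUnit_iff_isUnit_det g0).mp hg0
  have hXPd : IsUnit (X * P).det := (Matrix.isUnit_iff_isUnit_det _).mp hXP
  have hQXd : IsUnit (Q * X).det := (Matrix.isUnit_iff_isUnit_det _).mp hQX
  have hg1 : g0 * g0⁻¹ = 1 := Matrix.mul_nonsing_inv g0 hg0d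
  have hg2 : g0⁻¹ * g0 = 1 := Matrix.nonsing_inv_mul g0 hg0d
  have hXP1 : (X * P) * (X * P)⁻¹ = 1 := Matrix.mul_nonsing_inv _ hXPd
  have hXP2 : (X * P)⁻¹ * (X * P) = 1 := Matrix.nonsing_inv_mul _ hXPd
  have hQX1 : (Q * X) * (Q * X)⁻¹ = 1 := Matrix.mul_nonsing_inv _ hQXd
  have hQX2 : (Q * X)⁻¹ * (Q * X) = 1 := Matrix.nonsing_inv_mul _ hQXd
  set a := U * (Q * X)⁻¹ * V with ha
  set b := U * (X * P)⁻¹ * V with hb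
  have key1 : (Q * X)⁻¹ * (V * U) * (X * P)⁻¹ = (Q * X)⁻¹ - (X * P)⁻¹ := by
    rw [← hSyl, Matrix.mul_sub, Matrix.sub_mul]
    rw [mul_assoc ((Q * X)⁻¹) (X * P) ((X * P)⁻¹), hXP1, mul_one, hQX2, one_mul]
  have key2 : (X * P)⁻¹ * (V * U) * (Q * X)⁻¹ = (Q * X)⁻¹ - (X * P)⁻¹ := by
    rw [← hSyl, Matrix.mul_sub, Matrix.sub_mul]
    rw [mul_assoc ((X * P)⁻¹) (Q * X) ((Q * X)⁻¹), hQX1, mul_one, hXP2, one_mul]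
  have hab : a * b = a - b := by
    have : a * b = U * ((Q * X)⁻¹ * (V * U) * (X * P)⁻¹) * V := by
      simp only [ha, hb, Matrix.mul_assoc]
    rw [this, key1, Matrix.mul_sub, Matrix.sub_mul]
  have hba : b * a = a - b := by
    have : b * a = U * ((X * P)⁻¹ * (V * U) * (Q * X)⁻¹) * V := by
      simp only [ha, hb, Matrix.mul_assoc]
    rw [this, key2, Matrix.mul_sub, Matrix.sub_mul]
  have h1 : (1 + a) * (1 - b) = 1 := by
    have : (1 + a) * (1 - b) = 1 + a - b - a * b := by noncomm_ring
    rw [this, hab]; abel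
  have h2 : (1 - b) * (1 + a) = 1 := by
    have : (1 - b) * (1 + a) = 1 + a - b - b * a := by noncomm_ring
    rw [this, hba]; abel
  constructor
  · show (1 + a) * g0 * (g0⁻¹ * (1 - b)) = 1
    calc (1 + a) * g0 * (g0⁻¹ * (1 - b)) = (1 + a) * (g0 * g0⁻¹) * (1 - b) := by
          noncomm_ring
      _ = 1 := by rw [hg1, mul_one, h1]
  · show g0⁻¹ * (1 - b) * ((1 + a) * g0) = 1
    calc g0⁻¹ * (1 - b) * ((1 + a) * g0) = g0⁻¹ * ((1 - b) * (1 + a)) * g0 := by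
          noncomm_ring
      _ = 1 := by rw [h2, mul_one, hg2]
end

section
/- Let (Ω, d, d̄) be a bidifferential graded algebra, and within Ω⁰ (realized as matrices over a unital algebra) let P, Q be invertible n×n solutions of d̄P = (dP)P and d̄Q = Q dQ, and φ₀ an m×m element with d̄ d φ₀ = (d φ₀)(d φ₀). Suppose U (m×n) and V (n×m) satisfy d̄U = (dU)P + (dφ₀)U and d̄V = Q dV − V dφ₀, and X (n×n) satisfies the Sylvester equation X P − Q X = V U. If P and Q are independent (Q Y = Y P implies Y = 0), then X satisfies d̄X − (dX)P + (dQ)X + (dV)U = 0. -/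
/-- A bidifferential calculus: a graded associative unital algebra (here an ℕ-graded
ring `Ω` with grading `𝒜`) with two degree-one graded derivations `d`, `dbar`
satisfying d² = d̄² = d d̄ + d̄ d = 0. -/
structure BidiffCalc (Ω : Type*) [Ring Ω] (𝒜 : ℕ → AddSubgroup Ω) [GradedRing 𝒜] where
  d : Ω →+ Ω
  dbar : Ω →+ Ω
  d_mem : ∀ (r : ℕ) (x : Ω), x ∈ 𝒜 r → d x ∈ 𝒜 (r + 1)
  dbar_mem : ∀ (r : ℕ) (x : Ω), x ∈ 𝒜 r → dbar x ∈ 𝒜 (r + 1)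
  d_leibniz : ∀ (r : ℕ) (x y : Ω), x ∈ 𝒜 r →
    d (x * y) = d x * y + ((-1 : ℤ) ^ r) • (x * d y)
  dbar_leibniz : ∀ (r : ℕ) (x y : Ω), x ∈ 𝒜 r →
    dbar (x * y) = dbar x * y + ((-1 : ℤ) ^ r) • (x * dbar y)
  d_d : ∀ x, d (d x) = 0
  dbar_dbar : ∀ x, dbar (dbar x) = 0
  d_dbar_anticomm : ∀ x, d (dbar x) + dbar (d x) = 0

lemma stmt11_map_mul_leib {Ω : Type*} [Ring Ω] {𝒜 : ℕ → AddSubgroup Ω} [GradedRing 𝒜]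
    (D : Ω →+ Ω) (hD : ∀ x y : Ω, x ∈ 𝒜 0 → D (x * y) = D x * y + x * D y)
    {p q r : ℕ} (A : Matrix (Fin p) (Fin q) Ω) (B : Matrix (Fin q) (Fin r) Ω)
    (hA : ∀ i j, A i j ∈ 𝒜 0) :
    (A * B).map D = A.map D * B + A * B.map D := by
  ext i j
  simp only [Matrix.map_apply, Matrix.mul_apply, Matrix.add_apply, map_sum]
  rw [← Finset.sum_add_distrib]
  exact Finset.sum_congr rfl fun k _ => hD _ _ (hA i k)

lemma stmt11_map_sub {Ω : Type*} [Ring Ω] (D : Ω →+ Ω) {p q : ℕ}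
    (A B : Matrix (Fin p) (Fin q) Ω) : (A - B).map D = A.map D - B.map D := by
  ext i j; simp [Matrix.map_apply]


/-- In a bidifferential graded algebra with matrices over the degree-zero
part (d, d̄ acting entrywise on matrices), if P, Q solve d̄P = (dP)P, d̄Q = Q dQ,
φ₀ solves d̄ d φ₀ = (dφ₀)(dφ₀), U, V solve the linear equations, X solves the Sylvester
equation X P − Q X = V U, and P, Q are independent, then
d̄X − (dX)P + (dQ)X + (dV)U = 0. -/
theorem stmt11 {Ω : Type*} [Ring Ω] (𝒜 : ℕ → AddSubgroup Ω) [GradedRing 𝒜]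
    (c : BidiffCalc Ω 𝒜) {m n : ℕ}
    (P Q X Pi Qi : Matrix (Fin n) (Fin n) Ω)
    (φ0 : Matrix (Fin m) (Fin m) Ω)
    (U : Matrix (Fin m) (Fin n) Ω) (V : Matrix (Fin n) (Fin m) Ω)
    (hPdeg : ∀ i j, P i j ∈ 𝒜 0) (hQdeg : ∀ i j, Q i j ∈ 𝒜 0)
    (hXdeg : ∀ i j, X i j ∈ 𝒜 0) (hφ0deg : ∀ i j, φ0 i j ∈ 𝒜 0)
    (hUdeg : ∀ i j, U i j ∈ 𝒜 0) (hVdeg : ∀ i j, V i j ∈ 𝒜 0)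
    (hPinv : P * Pi = 1 ∧ Pi * P = 1) (hQinv : Q * Qi = 1 ∧ Qi * Q = 1)
    (hPeq : P.map c.dbar = P.map c.d * P)
    (hQeq : Q.map c.dbar = Q * Q.map c.d)
    (hφ0eq : (φ0.map c.d).map c.dbar = φ0.map c.d * φ0.map c.d)
    (hUeq : U.map c.dbar = U.map c.d * P + φ0.map c.d * U)
    (hVeq : V.map c.dbar = Q * V.map c.d - V * φ0.map c.d)
    (hSyl : X * P - Q * X = V * U)
    (hind : ∀ Y : Matrix (Fin n) (Fin n) Ω, Q * Y = Y * P → Y = 0) :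
    X.map c.dbar - X.map c.d * P + Q.map c.d * X + V.map c.d * U = 0 := by
  have hd0 : ∀ x y : Ω, x ∈ 𝒜 0 → c.d (x * y) = c.d x * y + x * c.d y := by
    intro x y hx
    rw [c.d_leibniz 0 x y hx]; simp
  have hdb0 : ∀ x y : Ω, x ∈ 𝒜 0 → c.dbar (x * y) = c.dbar x * y + x * c.dbar y := by
    intro x y hx
    rw [c.dbar_leibniz 0 x y hx]; simp
  -- derivative of the Sylvester equation by d
  have Hd : X.map c.d * P + X * P.map c.d - (Q.map c.d * X + Q * X.map c.d)
      = V.map c.d * U + V * U.map c.d := by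
    have := congrArg (Matrix.map · c.d) hSyl
    simpa [stmt11_map_sub, stmt11_map_mul_leib c.d hd0 X P hXdeg,
      stmt11_map_mul_leib c.d hd0 Q X hQdeg,
      stmt11_map_mul_leib c.d hd0 V U hVdeg] using this
  -- derivative by dbar, with substitutions
  have Hdb : X.map c.dbar * P + X * (P.map c.d * P)
      - (Q * Q.map c.d * X + Q * X.map c.dbar)
      = (Q * V.map c.d - V * φ0.map c.d) * U
        + V * (U.map c.d * P + φ0.map c.d * U) := by
    have := congrArg (Matrix.map · c.dbar) hSyl
    simpa [stmt11_map_sub, stmt11_map_mul_leib c.dbar hdb0 X P hXdeg,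
      stmt11_map_mul_leib c.dbar hdb0 Q X hQdeg,
      stmt11_map_mul_leib c.dbar hdb0 V U hVdeg, hPeq, hQeq, hUeq, hVeq] using this
  set W := X.map c.dbar - X.map c.d * P + Q.map c.d * X + V.map c.d * U with hW
  have key : Q * W = W * P := by
    have h : W * P - Q * W =
        (X.map c.dbar * P + X * (P.map c.d * P)
          - (Q * Q.map c.d * X + Q * X.map c.dbar)
          - ((Q * V.map c.d - V * φ0.map c.d) * U
            + V * (U.map c.d * P + φ0.map c.d * U)))
        - (X.map c.d * P + X * P.map c.d - (Q.map c.d * X + Q * X.map c.d)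
          - (V.map c.d * U + V * U.map c.d)) * P := by
      rw [hW]
      simp only [sub_eq_add_neg, neg_add, neg_neg, add_mul, mul_add, neg_mul, mul_neg,
        Matrix.add_mul, Matrix.mul_add, Matrix.neg_mul, Matrix.mul_neg, Matrix.mul_assoc,
        mul_assoc]
      abel
    rw [Hd, Hdb, sub_self, sub_self, zero_mul, sub_zero] at h
    exact (sub_eq_zero.mp h).symm
  exact hind W key
end

section
/- Let ε = 1 and let μ₁, μ₂ be defined by μᵢ = √((z−aᵢ)² + ρ²) − (z−aᵢ) with a₁ ≠ a₂, on the domain ρ > 0. Then the function 𝔉 = μ₁μ₂/(μ₁μ₂ + ρ²) satisfies the first-order system (ln 𝔉)_ρ = (ρ/2)((ln μ₁)_ρ(ln μ₂)_ρ − (ln μ₁)_z(ln μ₂)_z) and (ln 𝔉)_z = (ρ/2)((ln μ₁)_ρ(ln μ₂)_z + (ln μ₁)_z(ln μ₂)_ρ). -/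
/-- Partial derivative with respect to the first variable ρ. -/
noncomputable def pd1 (F : ℝ × ℝ → ℝ) (p : ℝ × ℝ) : ℝ := deriv (fun t => F (t, p.2)) p.1

/-- Partial derivative with respect to the second variable z. -/
noncomputable def pd2 (F : ℝ × ℝ → ℝ) (p : ℝ × ℝ) : ℝ := deriv (fun t => F (p.1, t)) p.2

/-!
With `r = √((z - a)² + ρ²)` the function `μ = r - (z - a)` satisfies `2 r μ = μ² + ρ²`, so its
partial derivatives `μ_ρ = ρ / r` and `μ_z = -μ / r` are rational in `μ` and `ρ`:
`(ln μ)_ρ = 2ρ / (μ² + ρ²)` and `(ln μ)_z = -2μ / (μ² + ρ²)`. Both identities for `ln 𝔉` then become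
rational identities in `μ₁, μ₂, ρ`; the one for `(ln 𝔉)_ρ` reduces to the factorisation
`ρ⁴ - μ₁²μ₂² = (ρ² - μ₁μ₂)(ρ² + μ₁μ₂)`.
-/

/-- The Belinski–Zakharov pole trajectory with constant `a`, at the point `p = (ρ, z)`. -/
noncomputable def poleTrajectory (a : ℝ) (p : ℝ × ℝ) : ℝ :=
  √((p.2 - a) ^ 2 + p.1 ^ 2) - (p.2 - a)

section poleTrajectory

variable (a : ℝ) {ρ z : ℝ}

lemma poleTrajectory_pos (hρ : ρ ≠ 0) : 0 < poleTrajectory a (ρ, z) := by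
  have hlt : z - a < √((z - a) ^ 2 + ρ ^ 2) :=
    Real.lt_sqrt_of_sq_lt (lt_add_of_pos_right _ (by positivity))
  exact sub_pos.mpr hlt

lemma two_mul_sqrt_mul_poleTrajectory :
    2 * √((z - a) ^ 2 + ρ ^ 2) * poleTrajectory a (ρ, z) = poleTrajectory a (ρ, z) ^ 2 + ρ ^ 2 := by
  have hsq : √((z - a) ^ 2 + ρ ^ 2) ^ 2 = (z - a) ^ 2 + ρ ^ 2 := Real.sq_sqrt (by positivity)
  unfold poleTrajectory
  linear_combination hsq

lemma hasDerivAt_poleTrajectory_fst (hρ : ρ ≠ 0) :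
    HasDerivAt (fun t => poleTrajectory a (t, z))
      (2 * ρ * poleTrajectory a (ρ, z) / (poleTrajectory a (ρ, z) ^ 2 + ρ ^ 2)) ρ := by
  have hpos : 0 < (z - a) ^ 2 + ρ ^ 2 := by positivity
  have h := (((hasDerivAt_pow 2 ρ).const_add ((z - a) ^ 2)).sqrt hpos.ne').sub_const (z - a)
  refine h.congr_deriv ?_
  have hμ := poleTrajectory_pos a (z := z) hρ
  have hr : 0 < √((z - a) ^ 2 + ρ ^ 2) := Real.sqrt_pos.mpr hpos
  rw [← two_mul_sqrt_mul_poleTrajectory]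
  field_simp
  norm_num

lemma hasDerivAt_poleTrajectory_snd (hρ : ρ ≠ 0) :
    HasDerivAt (fun t => poleTrajectory a (ρ, t))
      (-(2 * poleTrajectory a (ρ, z) ^ 2 / (poleTrajectory a (ρ, z) ^ 2 + ρ ^ 2))) z := by
  have hpos : 0 < (z - a) ^ 2 + ρ ^ 2 := by positivity
  have hin : HasDerivAt (fun t => (t - a) ^ 2 + ρ ^ 2) (2 * (z - a)) z := by
    simpa using (((hasDerivAt_id z).sub_const a).pow 2).add_const (ρ ^ 2)
  have h := (hin.sqrt hpos.ne').sub ((hasDerivAt_id z).sub_const a)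
  refine h.congr_deriv ?_
  have hμ := poleTrajectory_pos a (z := z) hρ
  have hr : 0 < √((z - a) ^ 2 + ρ ^ 2) := Real.sqrt_pos.mpr hpos
  rw [← two_mul_sqrt_mul_poleTrajectory]
  unfold poleTrajectory
  field_simp
  ring

end poleTrajectory

lemma hasDerivAt_mul_div_mul_add {f g c : ℝ → ℝ} {f' g' c' x : ℝ} (hf : HasDerivAt f f' x)
    (hg : HasDerivAt g g' x) (hc : HasDerivAt c c' x) (hx : f x * g x + c x ≠ 0) :
    HasDerivAt (fun t => f t * g t / (f t * g t + c t))
      (((f' * g x + f x * g') * c x - f x * g x * c') / (f x * g x + c x) ^ 2) x := by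
  refine ((hf.mul hg).div ((hf.mul hg).add hc) hx).congr_deriv ?_
  simp only [Pi.mul_apply, Pi.add_apply]
  ring

theorem stmt19_general (a₁ a₂ : ℝ) :
    let μ₁ : ℝ × ℝ → ℝ := fun p => Real.sqrt ((p.2 - a₁) ^ 2 + p.1 ^ 2) - (p.2 - a₁)
    let μ₂ : ℝ × ℝ → ℝ := fun p => Real.sqrt ((p.2 - a₂) ^ 2 + p.1 ^ 2) - (p.2 - a₂)
    let F : ℝ × ℝ → ℝ := fun p => μ₁ p * μ₂ p / (μ₁ p * μ₂ p + p.1 ^ 2)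
    ∀ p : ℝ × ℝ, 0 < p.1 →
      pd1 F p / F p
        = p.1 / 2 * ((pd1 μ₁ p / μ₁ p) * (pd1 μ₂ p / μ₂ p)
            - (pd2 μ₁ p / μ₁ p) * (pd2 μ₂ p / μ₂ p)) ∧
      pd2 F p / F p
        = p.1 / 2 * ((pd1 μ₁ p / μ₁ p) * (pd2 μ₂ p / μ₂ p)
            + (pd2 μ₁ p / μ₁ p) * (pd1 μ₂ p / μ₂ p)) := by
  intro μ₁ μ₂ F ⟨ρ, z⟩ (hρ : 0 < ρ)
  have hμ₁ρ := hasDerivAt_poleTrajectory_fst a₁ (z := z) hρ.ne'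
  have hμ₂ρ := hasDerivAt_poleTrajectory_fst a₂ (z := z) hρ.ne'
  have hμ₁z := hasDerivAt_poleTrajectory_snd a₁ (z := z) hρ.ne'
  have hμ₂z := hasDerivAt_poleTrajectory_snd a₂ (z := z) hρ.ne'
  have hm₁ := poleTrajectory_pos a₁ (z := z) hρ.ne'
  have hm₂ := poleTrajectory_pos a₂ (z := z) hρ.ne'
  have hD : poleTrajectory a₁ (ρ, z) * poleTrajectory a₂ (ρ, z) + ρ ^ 2 ≠ 0 := by positivity
  have hFρ := hasDerivAt_mul_div_mul_add hμ₁ρ hμ₂ρ (hasDerivAt_pow 2 ρ) hD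
  have hFz := hasDerivAt_mul_div_mul_add hμ₁z hμ₂z (hasDerivAt_const z (ρ ^ 2)) hD
  have e₁ : μ₁ = poleTrajectory a₁ := rfl
  have e₂ : μ₂ = poleTrajectory a₂ := rfl
  simp only [F, e₁, e₂, pd1, pd2]
  rw [hFρ.deriv, hFz.deriv, hμ₁ρ.deriv, hμ₂ρ.deriv, hμ₁z.deriv, hμ₂z.deriv]
  constructor
  · field_simp
    ring
  · field_simp
    ring

/-- With μᵢ(ρ,z) = √((z−aᵢ)² + ρ²) − (z−aᵢ), a₁ ≠ a₂, the function
𝔉 = μ₁μ₂/(μ₁μ₂ + ρ²) satisfies (ln 𝔉)_ρ = (ρ/2)((ln μ₁)_ρ(ln μ₂)_ρ − (ln μ₁)_z(ln μ₂)_z)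
and (ln 𝔉)_z = (ρ/2)((ln μ₁)_ρ(ln μ₂)_z + (ln μ₁)_z(ln μ₂)_ρ) on ρ > 0
(log-derivatives written as f_x/f). -/
theorem stmt19 (a₁ a₂ : ℝ) (ha : a₁ ≠ a₂) :
    let μ₁ : ℝ × ℝ → ℝ := fun p => Real.sqrt ((p.2 - a₁) ^ 2 + p.1 ^ 2) - (p.2 - a₁)
    let μ₂ : ℝ × ℝ → ℝ := fun p => Real.sqrt ((p.2 - a₂) ^ 2 + p.1 ^ 2) - (p.2 - a₂)
    let F : ℝ × ℝ → ℝ := fun p => μ₁ p * μ₂ p / (μ₁ p * μ₂ p + p.1 ^ 2)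
    ∀ p : ℝ × ℝ, 0 < p.1 →
      pd1 F p / F p
        = p.1 / 2 * ((pd1 μ₁ p / μ₁ p) * (pd1 μ₂ p / μ₂ p)
            - (pd2 μ₁ p / μ₁ p) * (pd2 μ₂ p / μ₂ p)) ∧
      pd2 F p / F p
        = p.1 / 2 * ((pd1 μ₁ p / μ₁ p) * (pd2 μ₂ p / μ₂ p)
            + (pd2 μ₁ p / μ₁ p) * (pd1 μ₂ p / μ₂ p)) :=
  stmt19_general a₁ a₂
end
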